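/- Consider the quadratic matrix pencil L: Y″ + (ρ²I + 2iρQ_1(x) + Q_0(x))Y = 0 on (0,π) with boundary conditions Y′(0) + (iρh_1 + h_0)Y(0) = 0 and Y′(π) + (iρH_1 + H_0)Y(π) = 0, where Q_1, Q_0 : [0,π] → ℂ^{m×m} are integrable with Q_1(x)† = −Q_1(x), Q_0(x)† = Q_0(x) a.e., and h_1† = −h_1, H_1† = −H_1, h_0† = h_0, H_0† = H_0. Suppose additionally that Q_0(x) is negative semidefinite for a.e. x ∈ [0,π], h_0 is negative semidefinite, and H_0 is positive semidefinite. Then every eigenvalue of L is real. -/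

import Mathlib

/-!
Let `ρ` be an eigenvalue with eigenvector `Y`, `Z = Y'`. Integrating `⟨Y, Y''⟩` by parts and
using the boundary conditions gives `ρ² a + ρ c = b` with
`a = ∫ |Y|² > 0`, `c = i (2 ∫ ⟨Y, Q₁Y⟩ - ⟨Y, H₁Y⟩(π) + ⟨Y, h₁Y⟩(0))` real because `Q₁, H₁, h₁` are
skew-Hermitian, and `b = ∫ |Y'|² + ⟨Y, H₀Y⟩(π) - ⟨Y, h₀Y⟩(0) - ∫ ⟨Y, Q₀Y⟩ ≥ 0` by the sign
conditions. A real quadratic with `a > 0` and `b ≥ 0` has no non-real root: for `ρ = x + iy`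
with `y ≠ 0` the imaginary part forces `c = -2ax`, and then the real part reads
`-a (x² + y²) = b`.
-/

open Matrix MeasureTheory Set

attribute [local instance] Matrix.normedAddCommGroup Matrix.normedSpace

/-- The matrix coefficient `ρ²I + 2iρQ₁(x) + Q₀(x)` of the pencil. -/
noncomputable def pencilPot (m : ℕ) (Q1 Q0 : ℝ → Matrix (Fin m) (Fin m) ℂ) (ρ : ℂ) (x : ℝ) :
    Matrix (Fin m) (Fin m) ℂ :=
  ρ ^ 2 • (1 : Matrix (Fin m) (Fin m) ℂ) + (2 * Complex.I * ρ) • Q1 x + Q0 x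

/-- `Y` (with derivative `Z`) is an absolutely continuous `ℂᵐ`-valued solution of
`Y'' + (ρ²I + 2iρQ₁(x) + Q₀(x))Y = 0` on `[0,π]`, encoded by integral equations. -/
def IsVecSol (m : ℕ) (Q1 Q0 : ℝ → Matrix (Fin m) (Fin m) ℂ) (ρ : ℂ)
    (Y Z : ℝ → Fin m → ℂ) : Prop :=
  ContinuousOn Y (Icc 0 Real.pi) ∧ ContinuousOn Z (Icc 0 Real.pi) ∧
  (∀ x ∈ Icc 0 Real.pi, Y x = Y 0 + ∫ t in (0:ℝ)..x, Z t) ∧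
  (∀ x ∈ Icc 0 Real.pi, Z x = Z 0 - ∫ t in (0:ℝ)..x, (pencilPot m Q1 Q0 ρ t).mulVec (Y t))

/-- `ρ` is an eigenvalue of the pencil `L`: there is a not identically zero absolutely
continuous solution of the equation satisfying both boundary conditions. -/
def IsEigenvalue (m : ℕ) (Q1 Q0 : ℝ → Matrix (Fin m) (Fin m) ℂ)
    (h1 h0 H1 H0 : Matrix (Fin m) (Fin m) ℂ) (ρ : ℂ) : Prop :=
  ∃ Y Z : ℝ → Fin m → ℂ,
    IsVecSol m Q1 Q0 ρ Y Z ∧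
    Z 0 + ((Complex.I * ρ) • h1 + h0).mulVec (Y 0) = 0 ∧
    Z Real.pi + ((Complex.I * ρ) • H1 + H0).mulVec (Y Real.pi) = 0 ∧
    ¬ (∀ x ∈ Icc 0 Real.pi, Y x = 0)

/-- `F` (with derivative `G`) is an absolutely continuous matrix solution of
`F'' + (ρ²I + 2iρQ₁(x) + Q₀(x))F = 0` on `[0,π]`, encoded by integral equations. -/
def IsMatSol (m : ℕ) (Q1 Q0 : ℝ → Matrix (Fin m) (Fin m) ℂ) (ρ : ℂ)
    (F G : ℝ → Matrix (Fin m) (Fin m) ℂ) : Prop :=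
  ContinuousOn F (Icc 0 Real.pi) ∧ ContinuousOn G (Icc 0 Real.pi) ∧
  (∀ x ∈ Icc 0 Real.pi, F x = F 0 + ∫ t in (0:ℝ)..x, G t) ∧
  (∀ x ∈ Icc 0 Real.pi, G x = G 0 - ∫ t in (0:ℝ)..x, pencilPot m Q1 Q0 ρ t * F t)

open scoped ComplexOrder ComplexConjugate

section Primitive

variable {𝕜 : Type*} [RCLike 𝕜] {a b : ℝ} {f g : ℝ → 𝕜}

/-- Fubini on the square `(a, b]²`, split along the diagonal. -/
theorem setIntegral_mul_setIntegral_Ioc (hf : IntegrableOn f (Ioc a b))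
    (hg : IntegrableOn g (Ioc a b)) :
    (∫ t in Ioc a b, f t) * (∫ t in Ioc a b, g t) =
      (∫ s in Ioc a b, f s * ∫ t in a..s, g t) + ∫ t in Ioc a b, (∫ s in a..t, f s) * g t := by
  set μ := volume.restrict (Ioc a b)
  set D : Set (ℝ × ℝ) := {p | p.2 ≤ p.1}
  have hD : MeasurableSet D := measurableSet_le measurable_snd measurable_fst
  have hfg : Integrable (fun p : ℝ × ℝ => f p.1 * g p.2) (μ.prod μ) := hf.mul_prod hg
  have lower : ∫ p, D.indicator (fun p => f p.1 * g p.2) p ∂μ.prod μ =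
      ∫ s in Ioc a b, f s * ∫ t in a..s, g t := by
    rw [integral_prod _ (hfg.indicator hD)]
    refine setIntegral_congr_fun measurableSet_Ioc fun s hs => ?_
    have hIic : Iic s ∩ Ioc a b = Ioc a s := by
      ext t; simp only [mem_inter_iff, mem_Iic, mem_Ioc]
      constructor
      · rintro ⟨h1, h2, -⟩; exact ⟨h2, h1⟩
      · rintro ⟨h1, h2⟩; exact ⟨h2, h1, h2.trans hs.2⟩
    have hind : (fun t => D.indicator (fun p => f p.1 * g p.2) (s, t)) =
        (Iic s).indicator (fun t => f s * g t) := by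
      ext t; simp [D, indicator]
    rw [hind, integral_indicator measurableSet_Iic, Measure.restrict_restrict measurableSet_Iic,
      hIic, integral_const_mul, intervalIntegral.integral_of_le hs.1.le]
  have upper : ∫ p, Dᶜ.indicator (fun p => f p.1 * g p.2) p ∂μ.prod μ =
      ∫ t in Ioc a b, (∫ s in a..t, f s) * g t := by
    rw [integral_prod_symm _ (hfg.indicator hD.compl)]
    refine setIntegral_congr_fun measurableSet_Ioc fun t ht => ?_
    have hIio : Iio t ∩ Ioc a b = Ioo a t := by
      ext s; simp only [mem_inter_iff, mem_Iio, mem_Ioc, mem_Ioo]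
      constructor
      · rintro ⟨h1, h2, -⟩; exact ⟨h2, h1⟩
      · rintro ⟨h1, h2⟩; exact ⟨h2, h1, h2.le.trans ht.2⟩
    have hind : (fun s => Dᶜ.indicator (fun p => f p.1 * g p.2) (s, t)) =
        (Iio t).indicator (fun s => f s * g t) := by
      ext s; simp [D, indicator]
    rw [hind, integral_indicator measurableSet_Iio, Measure.restrict_restrict measurableSet_Iio,
      hIio, integral_mul_const, intervalIntegral.integral_of_le ht.1.le,
      integral_Ioc_eq_integral_Ioo]
  rw [← lower, ← upper, ← integral_add (hfg.indicator hD) (hfg.indicator hD.compl)]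
  simp only [indicator_self_add_compl_apply]
  exact (integral_prod_mul f g).symm

theorem continuousOn_primitive_Icc {E : Type*} [NormedAddCommGroup E] [NormedSpace ℝ E]
    {h : ℝ → E} (hab : a ≤ b) (hh : IntegrableOn h (Icc a b)) :
    ContinuousOn (fun x => ∫ t in a..x, h t) (Icc a b) := by
  rw [← uIcc_of_le hab] at hh ⊢
  exact intervalIntegral.continuousOn_primitive_interval hh

theorem continuousOn_of_eq_add_integral {E : Type*} [NormedAddCommGroup E] [NormedSpace ℝ E]
    {H h : ℝ → E} (hab : a ≤ b) (hh : IntegrableOn h (Icc a b))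
    (hH : ∀ x ∈ Icc a b, H x = H a + ∫ t in a..x, h t) : ContinuousOn H (Icc a b) :=
  (continuousOn_const.add (continuousOn_primitive_Icc hab hh)).congr hH

theorem mul_sub_mul_eq_integral_of_eq_add_integral {F G : ℝ → 𝕜} (hab : a ≤ b) (hf : IntegrableOn f (Icc a b))
    (hg : IntegrableOn g (Icc a b)) (hF : ∀ x ∈ Icc a b, F x = F a + ∫ t in a..x, f t)
    (hG : ∀ x ∈ Icc a b, G x = G a + ∫ t in a..x, g t) :
    F b * G b - F a * G a = ∫ t in a..b, (f t * G t + F t * g t) := by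
  have hfG := hf.mul_continuousOn (continuousOn_primitive_Icc hab hg) isCompact_Icc
  have hFg := hg.continuousOn_mul (continuousOn_primitive_Icc hab hf) isCompact_Icc
  have hsplit : EqOn (fun t => f t * G t + F t * g t)
      (fun t => (G a * f t + F a * g t) + (f t * (∫ s in a..t, g s) + (∫ s in a..t, f s) * g t))
      (Ioc a b) := by
    intro t ht
    simp only [hF t (Ioc_subset_Icc_self ht), hG t (Ioc_subset_Icc_self ht)]
    ring
  have hIoc {h : ℝ → 𝕜} (hh : IntegrableOn h (Icc a b)) : IntegrableOn h (Ioc a b) :=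
    hh.mono_set Ioc_subset_Icc_self
  rw [hF b (right_mem_Icc.2 hab), hG b (right_mem_Icc.2 hab)]
  simp only [intervalIntegral.integral_of_le hab]
  have hbdry : IntegrableOn (fun t => G a * f t + F a * g t) (Ioc a b) :=
    ((hIoc hf).const_mul _).add ((hIoc hg).const_mul _)
  have hint : IntegrableOn
      (fun t => f t * (∫ s in a..t, g s) + (∫ s in a..t, f s) * g t) (Ioc a b) :=
    (hIoc hfG).add (hIoc hFg)
  rw [setIntegral_congr_fun measurableSet_Ioc hsplit, integral_add hbdry hint,
    integral_add ((hIoc hf).const_mul _) ((hIoc hg).const_mul _),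
    integral_add (hIoc hfG) (hIoc hFg), integral_const_mul, integral_const_mul]
  linear_combination setIntegral_mul_setIntegral_Ioc (hIoc hf) (hIoc hg)

theorem MeasureTheory.IntegrableOn.conj {X : Type*} [MeasurableSpace X] {μ : Measure X}
    {s : Set X} {u : X → 𝕜} (hu : IntegrableOn u s μ) : IntegrableOn (fun x => conj (u x)) s μ :=
  (RCLike.conjCLE : 𝕜 ≃L[ℝ] 𝕜).toContinuousLinearMap.integrable_comp hu

variable {ι : Type*} [Fintype ι]

theorem apply_eq_add_integral_apply {H h : ℝ → ι → 𝕜} (hh : IntegrableOn h (Icc a b))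
    (hH : ∀ x ∈ Icc a b, H x = H a + ∫ t in a..x, h t) (i : ι) :
    ∀ x ∈ Icc a b, H x i = H a i + ∫ t in a..x, h t i := by
  intro x hx
  have hhx : IntervalIntegrable h volume a x :=
    (hh.mono_set (by rw [uIcc_of_le hx.1]; exact Icc_subset_Icc_right hx.2)).intervalIntegrable
  rw [hH x hx, Pi.add_apply, ← ContinuousLinearMap.proj_apply (R := 𝕜) i (∫ t in a..x, h t),
    ← ContinuousLinearMap.intervalIntegral_comp_comm _ hhx]
  rfl

theorem star_dotProduct_sub_star_dotProduct_eq_integral {F G f g : ℝ → ι → 𝕜} (hab : a ≤ b)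
    (hf : IntegrableOn f (Icc a b)) (hg : IntegrableOn g (Icc a b))
    (hF : ∀ x ∈ Icc a b, F x = F a + ∫ t in a..x, f t)
    (hG : ∀ x ∈ Icc a b, G x = G a + ∫ t in a..x, g t) :
    star (F b) ⬝ᵥ G b - star (F a) ⬝ᵥ G a =
      ∫ t in a..b, (star (f t) ⬝ᵥ G t + star (F t) ⬝ᵥ g t) := by
  have hfi (i : ι) : IntegrableOn (fun t => f t i) (Icc a b) := integrable_pi_iff.1 hf i
  have hgi (i : ι) : IntegrableOn (fun t => g t i) (Icc a b) := integrable_pi_iff.1 hg i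
  have hFi (i : ι) : ContinuousOn (fun t => F t i) (Icc a b) :=
    (continuous_apply i).comp_continuousOn (continuousOn_of_eq_add_integral hab hf hF)
  have hGi (i : ι) : ContinuousOn (fun t => G t i) (Icc a b) :=
    (continuous_apply i).comp_continuousOn (continuousOn_of_eq_add_integral hab hg hG)
  have hconjF (i : ι) :
      ∀ x ∈ Icc a b, conj (F x i) = conj (F a i) + ∫ t in a..x, conj (f t i) := fun x hx => by
    rw [apply_eq_add_integral_apply hf hF i x hx, map_add,
      intervalIntegral.intervalIntegral_conj]
  have hsummand (i : ι) : IntervalIntegrable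
      (fun t => conj (f t i) * G t i + conj (F t i) * g t i) volume a b := by
    refine IntegrableOn.intervalIntegrable ?_
    rw [uIcc_of_le hab]
    exact ((hfi i).conj.mul_continuousOn (hGi i) isCompact_Icc).add
      ((hgi i).continuousOn_mul (hFi i).star isCompact_Icc)
  simp only [dotProduct, Pi.star_apply, RCLike.star_def, ← Finset.sum_sub_distrib,
    ← Finset.sum_add_distrib]
  rw [intervalIntegral.integral_finsetSum fun i _ => hsummand i]
  exact Finset.sum_congr rfl fun i _ => mul_sub_mul_eq_integral_of_eq_add_integral hab
    (hfi i).conj (hgi i) (hconjF i) (apply_eq_add_integral_apply hg hG i)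

end Primitive

theorem MeasureTheory.IntegrableOn.dotProduct_continuousOn {X R ι : Type*} [MeasurableSpace X]
    [TopologicalSpace X] [OpensMeasurableSpace X] [T2Space X] [NormedRing R]
    [SecondCountableTopologyEither X R] [Fintype ι] {μ : Measure X} {K : Set X} {v w : X → ι → R}
    (hv : IntegrableOn v K μ) (hw : ContinuousOn w K) (hK : IsCompact K) :
    IntegrableOn (fun x => v x ⬝ᵥ w x) K μ :=
  integrable_finsetSum _ fun i _ =>
    IntegrableOn.mul_continuousOn (integrable_pi_iff.1 hv i)
      ((continuous_apply i).comp_continuousOn hw) hK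

theorem MeasureTheory.IntegrableOn.continuousOn_dotProduct {X R ι : Type*} [MeasurableSpace X]
    [TopologicalSpace X] [OpensMeasurableSpace X] [T2Space X] [NormedRing R]
    [SecondCountableTopologyEither X R] [Fintype ι] {μ : Measure X} {K : Set X} {v w : X → ι → R}
    (hv : ContinuousOn v K) (hw : IntegrableOn w K μ) (hK : IsCompact K) :
    IntegrableOn (fun x => v x ⬝ᵥ w x) K μ :=
  integrable_finsetSum _ fun i _ =>
    IntegrableOn.continuousOn_mul ((continuous_apply i).comp_continuousOn hv)
      (integrable_pi_iff.1 hw i) hK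

theorem MeasureTheory.integrableOn_mulVec_of_continuousOn {X R ι κ : Type*} [MeasurableSpace X]
    [TopologicalSpace X] [OpensMeasurableSpace X] [T2Space X] [NormedRing R]
    [SecondCountableTopologyEither X R] [Fintype ι] [Fintype κ] {μ : Measure X} {K : Set X}
    {Q : X → Matrix κ ι R} {v : X → ι → R} (hQ : ∀ i, IntegrableOn (fun x => Q x i) K μ)
    (hv : ContinuousOn v K) (hK : IsCompact K) :
    IntegrableOn (fun x => Q x *ᵥ v x) K μ :=
  integrable_pi_iff.2 fun i => (hQ i).dotProduct_continuousOn hv hK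

theorem intervalIntegral_nonneg_of_ae_restrict {E : Type*} [NormedAddCommGroup E]
    [NormedSpace ℝ E] [PartialOrder E] [IsOrderedAddMonoid E] [IsOrderedModule ℝ E]
    [ClosedIciTopology E] {f : ℝ → E} {a b : ℝ} (hab : a ≤ b)
    (hf : 0 ≤ᵐ[volume.restrict (Icc a b)] f) : 0 ≤ ∫ t in a..b, f t := by
  rw [intervalIntegral.integral_of_le hab]
  exact integral_nonneg_of_ae (ae_restrict_of_ae_restrict_of_subset Ioc_subset_Icc_self hf)

theorem Complex.intervalIntegral_pos {f : ℝ → ℂ} {a b : ℝ} (hab : a < b)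
    (hf : ContinuousOn f (Icc a b)) (hle : ∀ x ∈ Icc a b, 0 ≤ f x)
    (hlt : ∃ c ∈ Icc a b, 0 < f c) : 0 < ∫ t in a..b, f t := by
  have hreal : EqOn f (fun t => ((f t).re : ℂ)) (uIcc a b) := by
    intro t ht
    rw [uIcc_of_le hab.le] at ht
    exact Complex.ext rfl (Complex.nonneg_iff.1 (hle t ht)).2.symm
  rw [intervalIntegral.integral_congr hreal, intervalIntegral.integral_ofReal,
    Complex.zero_lt_real]
  obtain ⟨c, hc, hfc⟩ := hlt
  exact intervalIntegral.integral_pos hab (Complex.continuous_re.comp_continuousOn hf)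
    (fun x hx => (Complex.nonneg_iff.1 (hle x (Ioc_subset_Icc_self hx))).1)
    ⟨c, hc, (Complex.pos_iff.1 hfc).1⟩

theorem intervalIntegral_star_dotProduct_self_pos {ι : Type*} [Fintype ι] {Y : ℝ → ι → ℂ}
    {a b : ℝ} (hab : a < b) (hY : ContinuousOn Y (Icc a b)) (hne : ∃ x ∈ Icc a b, Y x ≠ 0) :
    0 < ∫ t in a..b, star (Y t) ⬝ᵥ Y t := by
  obtain ⟨x, hx, hYx⟩ := hne
  exact Complex.intervalIntegral_pos hab
    ((continuous_fst.dotProduct continuous_snd).comp_continuousOn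
      (f := fun t => (star (Y t), Y t)) (hY.star.prodMk hY))
    (fun t _ => dotProduct_star_self_nonneg _) ⟨x, hx, dotProduct_star_self_pos_iff.2 hYx⟩

theorem Complex.re_intervalIntegral_eq_zero {f : ℝ → ℂ} {a b : ℝ} (hab : a ≤ b)
    (hf : ∀ᵐ t ∂volume.restrict (Icc a b), (f t).re = 0) : (∫ t in a..b, f t).re = 0 := by
  have hconj : conj (∫ t in a..b, f t) = -∫ t in a..b, f t := by
    rw [← intervalIntegral.intervalIntegral_conj, ← intervalIntegral.integral_neg]
    refine intervalIntegral.integral_congr_ae ?_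
    rw [uIoc_of_le hab]
    filter_upwards [(ae_restrict_iff' measurableSet_Icc).1 hf] with t ht hIoc
    exact Complex.ext (by simp [ht (Ioc_subset_Icc_self hIoc)]) (by simp)
  have := congrArg Complex.re hconj
  rw [Complex.conj_re, Complex.neg_re] at this
  linarith

theorem Matrix.re_star_dotProduct_mulVec_eq_zero {n : Type*} [Fintype n] {M : Matrix n n ℂ}
    (hM : Mᴴ = -M) (v : n → ℂ) : (star v ⬝ᵥ (M *ᵥ v)).re = 0 := by
  have hstar : star (star v ⬝ᵥ (M *ᵥ v)) = -(star v ⬝ᵥ (M *ᵥ v)) := by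
    rw [← star_dotProduct_star, star_star, star_mulVec, ← dotProduct_mulVec, hM, neg_mulVec,
      dotProduct_neg]
  have := congrArg Complex.re hstar
  rw [Complex.star_def, Complex.conj_re, Complex.neg_re] at this
  linarith

theorem Matrix.star_dotProduct_eq_of_add_mulVec_eq_zero {n : Type*} [Fintype n] {y z : n → ℂ}
    {c : ℂ} {M₁ M₀ : Matrix n n ℂ} (h : z + (c • M₁ + M₀) *ᵥ y = 0) :
    star y ⬝ᵥ z = -(c * (star y ⬝ᵥ (M₁ *ᵥ y)) + star y ⬝ᵥ (M₀ *ᵥ y)) := by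
  rw [eq_neg_of_add_eq_zero_left h, add_mulVec, smul_mulVec, dotProduct_neg, dotProduct_add,
    dotProduct_smul, smul_eq_mul]

theorem Complex.im_eq_zero_of_mul_sq_add_mul_eq {a b c ρ : ℂ} (ha : 0 < a) (hb : 0 ≤ b)
    (hc : c.im = 0) (h : a * ρ ^ 2 + c * ρ = b) : ρ.im = 0 := by
  obtain ⟨ha, ha'⟩ := Complex.pos_iff.1 ha
  obtain ⟨hb, hb'⟩ := Complex.nonneg_iff.1 hb
  have hre := congrArg Complex.re h
  have him := congrArg Complex.im h
  simp only [Complex.add_re, Complex.add_im, Complex.mul_re, Complex.mul_im, sq, ← ha', hc,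
    ← hb', zero_mul, sub_zero, add_zero] at hre him
  by_contra hne
  have hvertex : 2 * a.re * ρ.re + c.re = 0 :=
    mul_left_cancel₀ hne (by linear_combination him)
  nlinarith [mul_pos ha (mul_self_pos.2 hne), mul_nonneg ha.le (mul_self_nonneg ρ.re),
    congrArg (· * ρ.re) hvertex]

section Pencil

variable {m : ℕ} {Q1 Q0 : ℝ → Matrix (Fin m) (Fin m) ℂ} {ρ : ℂ} {Y Z : ℝ → Fin m → ℂ}

theorem pencilPot_mulVec (x : ℝ) (v : Fin m → ℂ) :
    pencilPot m Q1 Q0 ρ x *ᵥ v = ρ ^ 2 • v + (2 * Complex.I * ρ) • (Q1 x *ᵥ v) + Q0 x *ᵥ v := by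
  simp only [pencilPot, add_mulVec, smul_mulVec, one_mulVec]

theorem IsVecSol.star_dotProduct_sub_star_dotProduct_eq (hsol : IsVecSol m Q1 Q0 ρ Y Z)
    (hQ1 : ∀ i, IntegrableOn (fun x => Q1 x i) (Icc 0 Real.pi))
    (hQ0 : ∀ i, IntegrableOn (fun x => Q0 x i) (Icc 0 Real.pi)) :
    star (Y Real.pi) ⬝ᵥ Z Real.pi - star (Y 0) ⬝ᵥ Z 0 =
      (∫ t in (0)..Real.pi, star (Z t) ⬝ᵥ Z t) - ρ ^ 2 * (∫ t in (0)..Real.pi, star (Y t) ⬝ᵥ Y t)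
        - 2 * Complex.I * ρ * (∫ t in (0)..Real.pi, star (Y t) ⬝ᵥ (Q1 t *ᵥ Y t))
        - ∫ t in (0)..Real.pi, star (Y t) ⬝ᵥ (Q0 t *ᵥ Y t) := by
  obtain ⟨hY, hZ, hYeq, hZeq⟩ := hsol
  have hπ : (0 : ℝ) ≤ Real.pi := Real.pi_pos.le
  have hQY {Q : ℝ → Matrix (Fin m) (Fin m) ℂ}
      (hQ : ∀ i, IntegrableOn (fun x => Q x i) (Icc 0 Real.pi)) :
      IntegrableOn (fun t => Q t *ᵥ Y t) (Icc 0 Real.pi) :=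
    integrableOn_mulVec_of_continuousOn hQ hY isCompact_Icc
  have hPY : IntegrableOn (fun t => -(pencilPot m Q1 Q0 ρ t *ᵥ Y t)) (Icc 0 Real.pi) := by
    simp only [pencilPot_mulVec]
    exact (((hY.integrableOn_Icc.smul (ρ ^ 2)).add ((hQY hQ1).smul (2 * Complex.I * ρ))).add
      (hQY hQ0)).neg
  have hZeq' (x : ℝ) (hx : x ∈ Icc 0 Real.pi) :
      Z x = Z 0 + ∫ t in (0)..x, -(pencilPot m Q1 Q0 ρ t *ᵥ Y t) := by
    rw [hZeq x hx, intervalIntegral.integral_neg, sub_eq_add_neg]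
  have hform {U V : ℝ → Fin m → ℂ} (hU : ContinuousOn U (Icc 0 Real.pi))
      (hV : IntegrableOn V (Icc 0 Real.pi)) :
      IntervalIntegrable (fun t => star (U t) ⬝ᵥ V t) volume 0 Real.pi :=
    (intervalIntegrable_iff_integrableOn_Icc_of_le hπ).2
      (hV.continuousOn_dotProduct hU.star isCompact_Icc)
  have hZZ := hform hZ hZ.integrableOn_Icc
  have hYY := (hform hY hY.integrableOn_Icc).const_mul (ρ ^ 2)
  have hYQ1Y := (hform hY (hQY hQ1)).const_mul (2 * Complex.I * ρ)
  rw [star_dotProduct_sub_star_dotProduct_eq_integral hπ hZ.integrableOn_Icc hPY hYeq hZeq']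
  simp only [pencilPot_mulVec, dotProduct_neg, dotProduct_add, dotProduct_smul, smul_eq_mul,
    ← sub_eq_add_neg, ← sub_sub]
  rw [intervalIntegral.integral_sub ((hZZ.sub hYY).sub hYQ1Y) (hform hY (hQY hQ0)),
    intervalIntegral.integral_sub (hZZ.sub hYY) hYQ1Y, intervalIntegral.integral_sub hZZ hYY,
    intervalIntegral.integral_const_mul, intervalIntegral.integral_const_mul]

end Pencil

theorem all_eigenvalues_real_general (m : ℕ)
    (Q1 Q0 : ℝ → Matrix (Fin m) (Fin m) ℂ)
    (h1 h0 H1 H0 : Matrix (Fin m) (Fin m) ℂ)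
    (hQ1 : @IntegrableOn ℝ _ _ _ SeminormedAddGroup.toContinuousENorm Q1 (Icc 0 Real.pi) volume)
    (hQ0 : @IntegrableOn ℝ _ _ _ SeminormedAddGroup.toContinuousENorm Q0 (Icc 0 Real.pi) volume)
    (hQ1skew : ∀ᵐ x ∂(volume.restrict (Icc 0 Real.pi)), (Q1 x)ᴴ = -Q1 x)
    (hh1 : h1ᴴ = -h1) (hH1 : H1ᴴ = -H1)
    -- `Q₀ ≤ 0` a.e., `h₀ ≤ 0`, `H₀ ≥ 0`
    (hQ0neg : ∀ᵐ x ∂(volume.restrict (Icc 0 Real.pi)), (-(Q0 x)).PosSemidef)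
    (hh0neg : (-h0).PosSemidef) (hH0pos : H0.PosSemidef) :
    ∀ ρ : ℂ, IsEigenvalue m Q1 Q0 h1 h0 H1 H0 ρ → ρ.im = 0 := by
  rintro ρ ⟨Y, Z, hsol, hbc0, hbcπ, hYne⟩
  have hπ : (0 : ℝ) ≤ Real.pi := Real.pi_pos.le
  have energy := hsol.star_dotProduct_sub_star_dotProduct_eq (integrable_pi_iff.1 hQ1)
    (integrable_pi_iff.1 hQ0)
  rw [star_dotProduct_eq_of_add_mulVec_eq_zero hbcπ,
    star_dotProduct_eq_of_add_mulVec_eq_zero hbc0] at energy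
  push Not at hYne
  have hYY := intervalIntegral_star_dotProduct_self_pos Real.pi_pos hsol.1 hYne
  have hZZ : 0 ≤ ∫ t in (0)..Real.pi, star (Z t) ⬝ᵥ Z t :=
    intervalIntegral_nonneg_of_ae_restrict hπ (ae_of_all _ fun t => dotProduct_star_self_nonneg _)
  have hQ0form : 0 ≤ ∫ t in (0)..Real.pi, star (Y t) ⬝ᵥ (-Q0 t *ᵥ Y t) :=
    intervalIntegral_nonneg_of_ae_restrict hπ
      (hQ0neg.mono fun t ht => ht.dotProduct_mulVec_nonneg _)
  have hh0form := hh0neg.dotProduct_mulVec_nonneg (Y 0)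
  simp only [neg_mulVec, dotProduct_neg, intervalIntegral.integral_neg] at hQ0form hh0form
  have hQ1form : (∫ t in (0)..Real.pi, star (Y t) ⬝ᵥ (Q1 t *ᵥ Y t)).re = 0 :=
    Complex.re_intervalIntegral_eq_zero hπ
      (hQ1skew.mono fun t ht => re_star_dotProduct_mulVec_eq_zero ht _)
  refine Complex.im_eq_zero_of_mul_sq_add_mul_eq (c := Complex.I *
      (2 * (∫ t in (0)..Real.pi, star (Y t) ⬝ᵥ (Q1 t *ᵥ Y t))
        - star (Y Real.pi) ⬝ᵥ (H1 *ᵥ Y Real.pi) + star (Y 0) ⬝ᵥ (h1 *ᵥ Y 0))) hYY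
    (add_nonneg (add_nonneg (add_nonneg hZZ (hH0pos.dotProduct_mulVec_nonneg _)) hh0form)
      hQ0form) ?_ (by linear_combination energy)
  simp [hQ1form, re_star_dotProduct_mulVec_eq_zero hH1, re_star_dotProduct_mulVec_eq_zero hh1]

/-- Under condition (II), if moreover `Q₀(x) ≤ 0` a.e., `h₀ ≤ 0` and
`H₀ ≥ 0` (in the semidefinite order), then every eigenvalue of the pencil `L` is real. -/
theorem all_eigenvalues_real (m : ℕ) (hm : 1 ≤ m)
    (Q1 Q0 : ℝ → Matrix (Fin m) (Fin m) ℂ)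
    (h1 h0 H1 H0 : Matrix (Fin m) (Fin m) ℂ)
    (hQ1 : @IntegrableOn ℝ _ _ _ SeminormedAddGroup.toContinuousENorm Q1 (Icc 0 Real.pi) volume)
    (hQ0 : @IntegrableOn ℝ _ _ _ SeminormedAddGroup.toContinuousENorm Q0 (Icc 0 Real.pi) volume)
    (hQ1skew : ∀ᵐ x ∂(volume.restrict (Icc 0 Real.pi)), (Q1 x)ᴴ = -Q1 x)
    (hQ0herm : ∀ᵐ x ∂(volume.restrict (Icc 0 Real.pi)), (Q0 x)ᴴ = Q0 x)
    (hh1 : h1ᴴ = -h1) (hH1 : H1ᴴ = -H1) (hh0 : h0ᴴ = h0) (hH0 : H0ᴴ = H0)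
    -- `Q₀ ≤ 0` a.e., `h₀ ≤ 0`, `H₀ ≥ 0`
    (hQ0neg : ∀ᵐ x ∂(volume.restrict (Icc 0 Real.pi)), (-(Q0 x)).PosSemidef)
    (hh0neg : (-h0).PosSemidef) (hH0pos : H0.PosSemidef) :
    ∀ ρ : ℂ, IsEigenvalue m Q1 Q0 h1 h0 H1 H0 ρ → ρ.im = 0 :=
  all_eigenvalues_real_general m Q1 Q0 h1 h0 H1 H0 hQ1 hQ0 hQ1skew hh1 hH1 hQ0neg hh0neg hH0pos
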